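/- Under the substitution counting BPS states, the Katz-Klemm-Vafa generating function satisfies: if \(\sum_{g,h} (-1)^g r_{g,h} (y^{1/2} - y^{-1/2})^{2g} q^h = \prod_{n \ge 1} (1-q^n)^{-20} (1 - yq^n)^{-2} (1 - y^{-1} q^n)^{-2}\) as an identity of formal series in \(q\) with Laurent polynomial coefficients in \(y^{1/2}\), then \(r_{g,h} = 0\) for \(g > h\) and \(r_{g,g} = (-1)^g (g+1)\). -/

import Mathlib

/-!
Substituting `q ↦ y q` turns every factor of the product into a power series with constant
term `1` whose coefficients are polynomials in `y`, so the same holds for its inverse: `yʰ c_h`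
is a polynomial in `y`. At `y = 0` every factor becomes `1` except `(1 - y q)²` at `n = 1`, which
becomes `(1 - q)²`, so the constant term of `yʰ c_h` is `h + 1`, the coefficient of `qʰ` in
`(1 - q)⁻²`. On the other side `y^G (y^{1/2} - y^{-1/2})^{2g} = y^{G-g} (y - 1)^{2g}` has constant
term `1` if `g = G` and `0` if `g < G`; so if `G ≥ h` is the top index with `r_{G,h} ≠ 0`, the
constant term of `y^G c_h = y^{G-h} (yʰ c_h)` is `(-1)^G r_{G,h}`, and it is `0` unless `G = h`.
-/

open LaurentPolynomial PowerSeries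

theorem dvd_sub_of_dvd_mul_sub_one {α : Type*} [CommRing α] {a f u v : α}
    (hvu : v * u = 1) (hf : a ∣ f * u - 1) : a ∣ f - v := by
  have : f - v = (f * u - 1) * v := by linear_combination (-f) * hvu
  exact this ▸ hf.mul_right v

theorem PowerSeries.rescale_C {R : Type*} [CommSemiring R] (a b : R) : rescale a (C b) = C b := by
  ext n
  rcases n with _ | n <;> simp [coeff_rescale, coeff_C]

namespace KKV

noncomputable def kkvFactor (n : ℕ) : ℤ[T;T⁻¹]⟦X⟧ :=
  (1 - X ^ (n + 1)) ^ 20 * (1 - PowerSeries.C (T 1) * X ^ (n + 1)) ^ 2 *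
    (1 - PowerSeries.C (T (-1)) * X ^ (n + 1)) ^ 2

noncomputable def polyFactor (n : ℕ) : (Polynomial ℤ)⟦X⟧ :=
  (1 - PowerSeries.C (Polynomial.X ^ (n + 1)) * X ^ (n + 1)) ^ 20 *
    (1 - PowerSeries.C (Polynomial.X ^ (n + 2)) * X ^ (n + 1)) ^ 2 *
    (1 - PowerSeries.C (Polynomial.X ^ n) * X ^ (n + 1)) ^ 2

lemma rescale_kkvFactor (n : ℕ) :
    rescale (T 1) (kkvFactor n) = map Polynomial.toLaurent (polyFactor n) := by
  simp only [kkvFactor, polyFactor, map_mul, map_pow, map_sub, map_one, rescale_C, rescale_X,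
    map_C, map_X, mul_pow, ← mul_assoc]
  simp only [← map_pow, ← map_mul, T_pow, ← T_add]
  rw [Polynomial.toLaurent_X_pow, Polynomial.toLaurent_X_pow, Polynomial.toLaurent_X_pow,
    show (1 : ℤ) + ↑(n + 1) * 1 = ↑(n + 2) by push_cast; ring,
    show (-1 : ℤ) + ↑(n + 1) * 1 = n by push_cast; ring, mul_one]

lemma constantCoeff_polyFactor (n : ℕ) : constantCoeff (polyFactor n) = 1 := by
  simp [polyFactor]

lemma map_constantCoeff_polyFactor_zero :
    map Polynomial.constantCoeff (polyFactor 0) = (1 - X) ^ 2 := by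
  simp [polyFactor]

lemma map_constantCoeff_polyFactor_succ (n : ℕ) :
    map Polynomial.constantCoeff (polyFactor (n + 1)) = 1 := by
  simp [polyFactor]

lemma map_constantCoeff_prod_polyFactor (N : ℕ) :
    map Polynomial.constantCoeff (∏ n ∈ Finset.range (N + 1), polyFactor n) = (1 - X) ^ 2 := by
  rw [map_prod, Finset.prod_range_succ', map_constantCoeff_polyFactor_zero]
  simp [map_constantCoeff_polyFactor_succ]

lemma exists_T_mul_eq_toLaurent {c : ℕ → ℤ[T;T⁻¹]}
    (hc : ∀ N k : ℕ, k ≤ N →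
      coeff k (mk c * ∏ n ∈ Finset.range N, kkvFactor n) = coeff k 1) (k : ℕ) :
    ∃ p : Polynomial ℤ, T k * c k = Polynomial.toLaurent p ∧ p.coeff 0 = k + 1 := by
  set P := ∏ n ∈ Finset.range (k + 1), polyFactor n
  set W := P.invOfUnit 1
  have hPW : P * W = 1 :=
    P.mul_invOfUnit 1 (by simp [P, map_prod, constantCoeff_polyFactor])
  have hrescale : rescale (T 1) (∏ n ∈ Finset.range (k + 1), kkvFactor n) =
      map Polynomial.toLaurent P := by
    simp only [P, map_prod, rescale_kkvFactor]
  have hdvd : X ^ (k + 1) ∣ rescale (T 1) (mk c) * map Polynomial.toLaurent P - 1 := by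
    rw [← hrescale, ← map_mul, ← map_one (rescale (T 1)), ← map_sub]
    refine X_pow_dvd_iff.2 fun m hm => ?_
    rw [coeff_rescale, map_sub, hc (k + 1) m (by omega), sub_self, mul_zero]
  have hW : X ^ (k + 1) ∣ rescale (T 1) (mk c) - map Polynomial.toLaurent W :=
    dvd_sub_of_dvd_mul_sub_one (by rw [← map_mul, mul_comm, hPW, map_one]) hdvd
  have hWtop : map Polynomial.constantCoeff W = mk fun n => ((1 + n).choose 1 : ℤ) := by
    have hinv : map Polynomial.constantCoeff W * (1 - X) ^ 2 = 1 := by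
      rw [← map_constantCoeff_prod_polyFactor k, ← map_mul, mul_comm, hPW, map_one]
    calc map Polynomial.constantCoeff W
        = map Polynomial.constantCoeff W *
            ((1 - X) ^ 2 * mk fun n => ((1 + n).choose 1 : ℤ)) := by
          rw [mul_comm ((1 - X) ^ 2), mk_add_choose_mul_one_sub_pow_eq_one, mul_one]
      _ = mk fun n => ((1 + n).choose 1 : ℤ) := by rw [← mul_assoc, hinv, one_mul]
  refine ⟨coeff k W, ?_, ?_⟩
  · have := X_pow_dvd_iff.1 hW k (by omega)
    rwa [map_sub, sub_eq_zero, coeff_rescale, coeff_mk, T_pow, mul_one, coeff_map] at this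
  · have := congrArg (coeff k) hWtop
    rw [coeff_map, coeff_mk, Nat.choose_one_right, Polynomial.constantCoeff_apply] at this
    rw [this]
    push_cast
    ring

/-- `(y^{1/2} - y^{-1/2})^2`, with `T 1 = y`. -/
noncomputable def sqDiff : ℤ[T;T⁻¹] := T 1 - 2 + T (-1)

lemma T_one_mul_sqDiff : T 1 * sqDiff = Polynomial.toLaurent ((Polynomial.X - 1) ^ 2) := by
  have h : (T 1 : ℤ[T;T⁻¹]) * T (-1) = 1 := by rw [← T_add, add_neg_cancel, T_zero]
  simp only [sqDiff, map_pow, map_sub, map_one, Polynomial.toLaurent_X]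
  linear_combination h

lemma T_mul_sqDiff_pow {g G : ℕ} (hg : g ≤ G) :
    T G * sqDiff ^ g =
      Polynomial.toLaurent (Polynomial.X ^ (G - g) * (Polynomial.X - 1) ^ (2 * g)) := by
  have hT : (T G : ℤ[T;T⁻¹]) = T ↑(G - g) * T 1 ^ g := by
    rw [T_pow, ← T_add]; congr 1; push_cast [hg]; ring
  rw [hT, mul_assoc, ← mul_pow, T_one_mul_sqDiff, ← map_pow, ← pow_mul, map_mul,
    Polynomial.toLaurent_X_pow]

lemma T_mul_sum_sqDiff_pow (a : ℕ → ℤ) (G : ℕ) :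
    T G * ∑ g ∈ Finset.range (G + 1), a g • sqDiff ^ g =
      Polynomial.toLaurent (∑ g ∈ Finset.range (G + 1),
        a g • (Polynomial.X ^ (G - g) * (Polynomial.X - 1) ^ (2 * g))) := by
  rw [Finset.mul_sum, map_sum]
  refine Finset.sum_congr rfl fun g hg => ?_
  rw [mul_smul_comm, T_mul_sqDiff_pow (Finset.mem_range_succ_iff.1 hg), map_zsmul]

lemma coeff_zero_sum_smul_X_pow_mul (a : ℕ → ℤ) (G : ℕ) :
    (∑ g ∈ Finset.range (G + 1),
      a g • (Polynomial.X ^ (G - g) * (Polynomial.X - 1) ^ (2 * g)) : Polynomial ℤ).coeff 0 =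
      a G := by
  rw [Polynomial.finsetSum_coeff, Finset.sum_eq_single G]
  · simp [Polynomial.coeff_zero_eq_eval_zero, pow_mul]
  · intro g hg hgG
    have : 0 < G - g := by have := Finset.mem_range_succ_iff.1 hg; omega
    simp [this.ne]
  · simp

lemma eq_ite_of_T_mul_finsum_eq_toLaurent (a : ℕ → ℤ) {h G : ℕ} (hG : h ≤ G)
    (ha : ∀ g, G < g → a g = 0) {p : Polynomial ℤ}
    (hp : T h * ∑ᶠ g, a g • sqDiff ^ g = Polynomial.toLaurent p) :
    a G = if G = h then p.coeff 0 else 0 := by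
  have hsum : ∑ᶠ g, a g • sqDiff ^ g = ∑ g ∈ Finset.range (G + 1), a g • sqDiff ^ g := by
    refine finsum_eq_sum_of_support_subset _ fun g hg => ?_
    by_contra hgG
    simp_all [ha g (by simpa using hgG)]
  have hT : (T G : ℤ[T;T⁻¹]) = T ↑(G - h) * T h := by
    rw [← T_add]; congr 1; push_cast [hG]; ring
  have hpoly : Polynomial.X ^ (G - h) * p = ∑ g ∈ Finset.range (G + 1),
      a g • (Polynomial.X ^ (G - g) * (Polynomial.X - 1) ^ (2 * g)) := by
    apply Polynomial.toLaurent_injective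
    rw [map_mul, ← hp, Polynomial.toLaurent_X_pow, ← mul_assoc, ← hT, hsum,
      T_mul_sum_sqDiff_pow]
  rw [← coeff_zero_sum_smul_X_pow_mul a G, ← hpoly, Polynomial.coeff_X_pow_mul']
  rcases eq_or_ne G h with rfl | hGh
  · simp
  · rw [if_neg hGh, if_neg (by omega)]

end KKV

open KKV

/-- Katz–Klemm–Vafa: writing `s = (y^{1/2} - y^{-1/2})² = y - 2 + y⁻¹` (a Laurent
polynomial), suppose `∑_{g,h} (-1)ᵍ r_{g,h} sᵍ qʰ = ∏_{n≥1} (1-qⁿ)^{-20}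
(1-yqⁿ)^{-2} (1-y⁻¹qⁿ)^{-2}` as formal series in `q` with Laurent-polynomial
coefficients (the identity being expressed via truncated products).  Then
`r_{g,h} = 0` for `g > h` and `r_{g,g} = (-1)ᵍ (g+1)`. -/
theorem stmt_9 (r : ℕ → ℕ → ℤ)
    (hfin : ∀ h : ℕ, {g : ℕ | r g h ≠ 0}.Finite)
    (hid : ∀ N k : ℕ, k ≤ N →
      (PowerSeries.coeff (R := LaurentPolynomial ℤ) k)
        ((PowerSeries.mk fun h : ℕ =>
            ∑ᶠ g : ℕ, ((-1 : ℤ) ^ g * r g h) •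
              ((LaurentPolynomial.T 1 - 2 + LaurentPolynomial.T (-1) :
                LaurentPolynomial ℤ)) ^ g) *
          ∏ n ∈ Finset.range N,
            ((1 - (PowerSeries.X : PowerSeries (LaurentPolynomial ℤ)) ^ (n + 1)) ^ 20 *
              (1 - PowerSeries.C (R := LaurentPolynomial ℤ) (LaurentPolynomial.T 1) *
                  PowerSeries.X ^ (n + 1)) ^ 2 *
              (1 - PowerSeries.C (R := LaurentPolynomial ℤ) (LaurentPolynomial.T (-1)) *
                  PowerSeries.X ^ (n + 1)) ^ 2)) =
        (PowerSeries.coeff (R := LaurentPolynomial ℤ) k) 1) :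
    (∀ g h : ℕ, h < g → r g h = 0) ∧
      ∀ g : ℕ, r g g = (-1) ^ g * ((g : ℤ) + 1) := by
  have htop : ∀ h G, h ≤ G → (∀ g, G < g → r g h = 0) →
      (-1) ^ G * r G h = if G = h then (h : ℤ) + 1 else 0 := by
    intro h G hG hGr
    obtain ⟨p, hp, hp0⟩ := exists_T_mul_eq_toLaurent
      (c := fun h => ∑ᶠ g, ((-1 : ℤ) ^ g * r g h) • sqDiff ^ g) hid h
    rw [← hp0]
    exact eq_ite_of_T_mul_finsum_eq_toLaurent _ hG (fun g hg => by simp [hGr g hg]) hp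
  have hvanish : ∀ g h, h < g → r g h = 0 := by
    intro g h hhg
    by_contra hne
    obtain ⟨G, ⟨hhG, hG⟩, hmax⟩ := Set.exists_max_image {g | h < g ∧ r g h ≠ 0} id
      ((hfin h).subset fun g hg => hg.2) ⟨g, hhg, hne⟩
    have := htop h G hhG.le fun g' hg' => by
      by_contra h'
      exact absurd (hmax g' ⟨by omega, h'⟩) (by simpa using hg')
    exact hG (by simpa [hhG.ne'] using this)
  refine ⟨hvanish, fun g => ?_⟩
  have := htop g g le_rfl fun g' hg' => hvanish g' g hg'
  rw [if_pos rfl] at this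
  rw [← this, ← mul_assoc, ← mul_pow, neg_one_mul, neg_neg, one_pow, one_mul]
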